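/- Let ν > 0 and let B be a q × q real symmetric matrix with eigenvalues b̃₁,…,b̃_q. Then for every q × q real positive semi-definite matrix D, (1/2)‖D − B‖_F² + ν tr(D) ≥ (1/2) Σ_{i=1}^q (g_ν(b̃_i) − b̃_i)² + ν Σ_{i=1}^q g_ν(b̃_i), where g_ν(x) = max(x − ν, 0); that is, the minimum value of (1/2)‖D − B‖_F² + ν tr(D) over positive semi-definite D equals (1/2) Σ_i (g_ν(b̃_i) − b̃_i)² + ν Σ_i g_ν(b̃_i). -/

import Mathlib

/-!
Conjugating by the orthogonal `P` preserves both the Frobenius norm and the trace, so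
`B` may be taken diagonal, `B = diagonal b`, with `D` replaced by the positive
semi-definite `E = Pᵀ D P`. Discarding the off-diagonal entries of `E - diagonal b`
only decreases the objective, which then splits into the scalar problems
`min_{x ≥ 0} (1/2)(x - bᵢ)² + ν x`, each solved by `x = max (bᵢ - ν) 0`.
Taking `D = P diag(max (bᵢ - ν) 0) Pᵀ` attains the bound.
-/

open Matrix

/-- The squared Frobenius norm of a real matrix. -/
def frobSq {q : ℕ} (W : Matrix (Fin q) (Fin q) ℝ) : ℝ := ∑ i, ∑ j, (W i j) ^ 2

noncomputable def proxObjective (ν c x : ℝ) : ℝ := (1 / 2) * (x - c) ^ 2 + ν * x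

theorem proxObjective_max_sub_le (ν c : ℝ) {x : ℝ} (hx : 0 ≤ x) :
    proxObjective ν c (max (c - ν) 0) ≤ proxObjective ν c x := by
  unfold proxObjective
  rcases le_or_gt (c - ν) 0 with h | h
  · rw [max_eq_right h]; nlinarith
  · rw [max_eq_left h.le]; nlinarith [sq_nonneg (x - (c - ν))]

theorem sum_proxObjective {ι : Type*} (s : Finset ι) (ν : ℝ) (c x : ι → ℝ) :
    ∑ i ∈ s, proxObjective ν (c i) (x i) =
      (1 / 2) * ∑ i ∈ s, (x i - c i) ^ 2 + ν * ∑ i ∈ s, x i := by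
  simp only [proxObjective, Finset.sum_add_distrib, Finset.mul_sum]

theorem frobSq_eq_trace_mul_transpose {q : ℕ} (W : Matrix (Fin q) (Fin q) ℝ) :
    frobSq W = (W * Wᵀ).trace := by
  simp [frobSq, trace, mul_apply, sq]

theorem trace_mul_mul_transpose {n R : Type*} [Fintype n] [DecidableEq n] [CommRing R]
    {P : Matrix n n R} (hP : Pᵀ * P = 1) (A : Matrix n n R) :
    (P * A * Pᵀ).trace = A.trace := by
  rw [trace_mul_cycle, hP, one_mul]

theorem frobSq_mul_mul_transpose {q : ℕ} {P : Matrix (Fin q) (Fin q) ℝ} (hP : Pᵀ * P = 1)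
    (A : Matrix (Fin q) (Fin q) ℝ) : frobSq (P * A * Pᵀ) = frobSq A := by
  have hconj : (P * A * Pᵀ) * (P * A * Pᵀ)ᵀ = P * (A * Aᵀ) * Pᵀ := by
    simp only [transpose_mul, transpose_transpose, Matrix.mul_assoc]
    rw [← Matrix.mul_assoc Pᵀ P, hP, Matrix.one_mul]
  rw [frobSq_eq_trace_mul_transpose, frobSq_eq_trace_mul_transpose, hconj,
    trace_mul_mul_transpose hP]

theorem sum_sq_diag_le_frobSq {q : ℕ} (W : Matrix (Fin q) (Fin q) ℝ) :
    ∑ i, W i i ^ 2 ≤ frobSq W :=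
  Finset.sum_le_sum fun i _ =>
    Finset.single_le_sum (f := fun j => W i j ^ 2) (fun _ _ => sq_nonneg _) (Finset.mem_univ i)

theorem frobSq_diagonal {q : ℕ} (d : Fin q → ℝ) :
    frobSq (diagonal d) = ∑ i, d i ^ 2 := by
  refine Finset.sum_congr rfl fun i _ => ?_
  rw [Finset.sum_eq_single i (fun j _ hj => by simp [diagonal_apply_ne' _ hj]) (by simp)]
  simp

theorem sum_proxObjective_le_of_posSemidef {q : ℕ} (ν : ℝ) (b : Fin q → ℝ)
    {E : Matrix (Fin q) (Fin q) ℝ} (hE : E.PosSemidef) :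
    ∑ i, proxObjective ν (b i) (max (b i - ν) 0) ≤
      (1 / 2) * frobSq (E - diagonal b) + ν * E.trace :=
  calc ∑ i, proxObjective ν (b i) (max (b i - ν) 0)
      ≤ ∑ i, proxObjective ν (b i) (E i i) :=
        Finset.sum_le_sum fun i _ => proxObjective_max_sub_le ν (b i) hE.diag_nonneg
    _ = (1 / 2) * ∑ i, (E - diagonal b) i i ^ 2 + ν * E.trace := by
        simp [sum_proxObjective, trace]
    _ ≤ (1 / 2) * frobSq (E - diagonal b) + ν * E.trace := by
        gcongr; exact sum_sq_diag_le_frobSq _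

theorem prox_trace_norm_psd_min_value_general {q : ℕ} (ν : ℝ)
    (B P : Matrix (Fin q) (Fin q) ℝ) (b : Fin q → ℝ)
    (hP : P * Pᵀ = 1)
    (hB : B = P * Matrix.diagonal b * Pᵀ) :
    (∀ D : Matrix (Fin q) (Fin q) ℝ, D.PosSemidef →
      (1 / 2) * (∑ i, (max (b i - ν) 0 - b i) ^ 2) + ν * (∑ i, max (b i - ν) 0) ≤
        (1 / 2) * frobSq (D - B) + ν * D.trace) ∧
    (∃ D : Matrix (Fin q) (Fin q) ℝ, D.PosSemidef ∧
      (1 / 2) * frobSq (D - B) + ν * D.trace =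
        (1 / 2) * (∑ i, (max (b i - ν) 0 - b i) ^ 2) + ν * (∑ i, max (b i - ν) 0)) := by
  have hP' : Pᵀ * P = 1 := mul_eq_one_comm.mp hP
  rw [← sum_proxObjective]
  constructor
  · intro D hD
    have hE : (Pᵀ * D * P).PosSemidef := by
      simpa [conjTranspose_eq_transpose_of_trivial] using hD.conjTranspose_mul_mul_same P
    have hD_eq : D = P * (Pᵀ * D * P) * Pᵀ := by
      simp only [← Matrix.mul_assoc, hP, Matrix.one_mul]
      rw [Matrix.mul_assoc, hP, Matrix.mul_one]
    rw [hD_eq, hB, ← Matrix.sub_mul, ← Matrix.mul_sub, frobSq_mul_mul_transpose hP',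
      trace_mul_mul_transpose hP']
    exact sum_proxObjective_le_of_posSemidef ν b hE
  · refine ⟨P * diagonal (fun i => max (b i - ν) 0) * Pᵀ, ?_, ?_⟩
    · simpa [conjTranspose_eq_transpose_of_trivial] using
        (posSemidef_diagonal_iff.mpr fun i => le_max_right (b i - ν) 0).mul_mul_conjTranspose_same P
    · rw [hB, ← Matrix.sub_mul, ← Matrix.mul_sub, diagonal_sub, frobSq_mul_mul_transpose hP',
        trace_mul_mul_transpose hP', frobSq_diagonal, trace_diagonal, sum_proxObjective]

/-- For `ν > 0` and a symmetric `B = P diag(b) Pᵀ` (`P` orthogonal, so `b` lists the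
eigenvalues of `B`), every positive semi-definite `D` satisfies
`(1/2)‖D - B‖_F² + ν tr(D) ≥ (1/2) Σᵢ (g_ν(bᵢ) - bᵢ)² + ν Σᵢ g_ν(bᵢ)` with
`g_ν(x) = max (x - ν) 0`, and this lower bound is attained by some positive
semi-definite `D`; that is, it is the minimum value of the objective over
positive semi-definite matrices. -/
theorem prox_trace_norm_psd_min_value {q : ℕ} (ν : ℝ) (hν : 0 < ν)
    (B P : Matrix (Fin q) (Fin q) ℝ) (b : Fin q → ℝ)
    (hBsymm : B.IsSymm) (hP : P * Pᵀ = 1)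
    (hB : B = P * Matrix.diagonal b * Pᵀ) :
    (∀ D : Matrix (Fin q) (Fin q) ℝ, D.PosSemidef →
      (1 / 2) * (∑ i, (max (b i - ν) 0 - b i) ^ 2) + ν * (∑ i, max (b i - ν) 0) ≤
        (1 / 2) * frobSq (D - B) + ν * D.trace) ∧
    (∃ D : Matrix (Fin q) (Fin q) ℝ, D.PosSemidef ∧
      (1 / 2) * frobSq (D - B) + ν * D.trace =
        (1 / 2) * (∑ i, (max (b i - ν) 0 - b i) ^ 2) + ν * (∑ i, max (b i - ν) 0)) :=
  prox_trace_norm_psd_min_value_general ν B P b hP hB
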